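/- arXiv:math/0701899 — 9 statements merged into one kernel-verified Lean document; each statement's English description precedes it below -/
import Mathlib

section
/- Let G be a second-countable profinite group, μ the normalized Haar probability measure on G, and T : G → G a quotient-preserving map. Then T is measure-preserving with respect to μ if and only if T is surjective. -/
open MeasureTheory

/-- `T` factors through the quotient map `G → G/N`. -/
def MapFactorsThrough {G : Type*} [Group G] (T : G → G) (N : Subgroup G) : Prop :=
  ∀ x y : G, x⁻¹ * y ∈ N → (T x)⁻¹ * T y ∈ N

/-- `T` is a quotient-preserving map: the open normal subgroups through whose quotient
maps `T` factors contain a base of neighborhoods of the identity. -/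
def QuotientPreserving {G : Type*} [Group G] [TopologicalSpace G] (T : G → G) : Prop :=
  ∀ U ∈ nhds (1 : G), ∃ N : Subgroup G,
    N.Normal ∧ IsOpen (N : Set G) ∧ (N : Set G) ⊆ U ∧ MapFactorsThrough T N

/-!
A quotient-preserving map `T` induces maps `T_N = hN.lift` on the finite quotients `G ⧸ N` by
the open subgroups through which it factors, and both sides of the equivalence turn out to be
equivalent to the surjectivity of every `T_N`. For surjectivity: if every `T_N` is onto, the fibres
`T⁻¹(gN)` form a directed family of nonempty closed sets, so by compactness they share a point
`x`, and `T x = g` because these `N` shrink to `1`. For measure preservation: the fibres of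
`G → G ⧸ N` all have measure `μ N`, so `T` preserves the measure of the `N`-saturated sets
exactly when `T_N` is a bijection, i.e. onto; and the saturated sets form a basis of the topology
that is closed under intersections, so by second countability they generate the Borel σ-algebra
as a π-system.
-/

open Function Set Filter Topology

theorem MeasureTheory.measurePreserving_iff_measure_preimage {α : Type*} [MeasurableSpace α]
    {μ : Measure α} {f : α → α} (hf : Measurable f) :
    MeasurePreserving f μ μ ↔ ∀ S : Set α, MeasurableSet S → μ (f ⁻¹' S) = μ S :=
  ⟨fun h S hS ↦ h.measure_preimage hS.nullMeasurableSet,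
    fun h ↦ ⟨hf, Measure.ext fun S hS ↦ by rw [Measure.map_apply hf hS, h S hS]⟩⟩

section Group

variable {G : Type*} [Group G] {T : G → G} {N : Subgroup G}

theorem QuotientGroup.preimage_mk_singleton_mk (g : G) :
    QuotientGroup.mk ⁻¹' {(g : G ⧸ N)} = (g⁻¹ * ·) ⁻¹' (N : Set G) := by
  ext x
  rw [mem_preimage, mem_singleton_iff, eq_comm, QuotientGroup.eq]
  rfl

namespace MapFactorsThrough

def lift (hT : MapFactorsThrough T N) : G ⧸ N → G ⧸ N :=
  Quotient.map' T fun x y h ↦ by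
    rw [QuotientGroup.leftRel_apply] at h ⊢
    exact hT x y h

@[simp]
theorem lift_mk (hT : MapFactorsThrough T N) (x : G) : hT.lift (x : G ⧸ N) = T x :=
  rfl

theorem preimage_preimage_mk (hT : MapFactorsThrough T N) (A : Set (G ⧸ N)) :
    T ⁻¹' (QuotientGroup.mk ⁻¹' A) = QuotientGroup.mk ⁻¹' (hT.lift ⁻¹' A) :=
  rfl

theorem lift_surjective (hT : MapFactorsThrough T N) (hsurj : Surjective T) :
    Surjective hT.lift :=
  QuotientGroup.mk_surjective.forall.2 fun y ↦
    let ⟨x, hx⟩ := hsurj y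
    ⟨x, by rw [lift_mk, hx]⟩

end MapFactorsThrough

end Group

section Measure

variable {G : Type*} [Group G] [MeasurableSpace G] [MeasurableMul G] {N : Subgroup G}

theorem measurableSet_preimage_mk_singleton (hN : MeasurableSet (N : Set G)) (q : G ⧸ N) :
    MeasurableSet (QuotientGroup.mk ⁻¹' {q}) := by
  obtain ⟨g, rfl⟩ := QuotientGroup.mk_surjective q
  rw [QuotientGroup.preimage_mk_singleton_mk]
  exact measurable_const_mul g⁻¹ hN

variable (μ : Measure G) [μ.IsMulLeftInvariant]

theorem measure_preimage_mk_singleton (q : G ⧸ N) :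
    μ (QuotientGroup.mk ⁻¹' {q}) = μ N := by
  obtain ⟨g, rfl⟩ := QuotientGroup.mk_surjective q
  rw [QuotientGroup.preimage_mk_singleton_mk, measure_preimage_mul]

theorem measure_preimage_mk_of_finite (hN : MeasurableSet (N : Set G)) {A : Set (G ⧸ N)}
    (hA : A.Finite) : μ (QuotientGroup.mk ⁻¹' A) = A.ncard * μ N := by
  obtain ⟨s, rfl⟩ := hA.exists_finset_coe
  rw [← sum_measure_preimage_singleton s fun q _ ↦ measurableSet_preimage_mk_singleton hN q]
  simp only [measure_preimage_mk_singleton, Finset.sum_const, nsmul_eq_mul, ncard_coe_finset]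

theorem MapFactorsThrough.measure_preimage_preimage_mk [Finite (G ⧸ N)] {T : G → G}
    (hN : MeasurableSet (N : Set G)) (hT : MapFactorsThrough T N) (hsurj : Surjective hT.lift)
    (A : Set (G ⧸ N)) :
    μ (T ⁻¹' (QuotientGroup.mk ⁻¹' A)) = μ (QuotientGroup.mk ⁻¹' A) := by
  rw [hT.preimage_preimage_mk, measure_preimage_mk_of_finite μ hN (toFinite _),
    measure_preimage_mk_of_finite μ hN (toFinite _),
    ncard_preimage_of_injective_subset_range (Finite.injective_iff_surjective.2 hsurj)
      (by simp [hsurj.range_eq])]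

end Measure

section Topology

variable {G : Type*} [Group G] [TopologicalSpace G] {T : G → G}

theorem QuotientPreserving.exists_le_inf (hT : QuotientPreserving T) {N₁ N₂ : Subgroup G}
    (hN₁ : IsOpen (N₁ : Set G)) (hN₂ : IsOpen (N₂ : Set G)) :
    ∃ N : Subgroup G,
      IsOpen (N : Set G) ∧ MapFactorsThrough T N ∧ N ≤ N₁ ∧ N ≤ N₂ := by
  obtain ⟨N, -, hNo, hsub, hNT⟩ :=
    hT _ (inter_mem (hN₁.mem_nhds N₁.one_mem) (hN₂.mem_nhds N₂.one_mem))
  exact ⟨N, hNo, hNT, fun x hx ↦ (hsub hx).1, fun x hx ↦ (hsub hx).2⟩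

def SurjectiveOnQuotients (T : G → G) : Prop :=
  ∀ N : Subgroup G, IsOpen (N : Set G) → ∀ hN : MapFactorsThrough T N, Surjective hN.lift

def factorCylinders (T : G → G) : Set (Set G) :=
  {S | ∃ N : Subgroup G, IsOpen (N : Set G) ∧ MapFactorsThrough T N ∧
    ∃ A : Set (G ⧸ N), QuotientGroup.mk ⁻¹' A = S}

theorem QuotientPreserving.isPiSystem_factorCylinders (hT : QuotientPreserving T) :
    IsPiSystem (factorCylinders T) := by
  rintro _ ⟨N₁, hN₁, -, A₁, rfl⟩ _ ⟨N₂, hN₂, -, A₂, rfl⟩ -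
  obtain ⟨N, hNo, hNT, h₁, h₂⟩ := hT.exists_le_inf hN₁ hN₂
  exact ⟨N, hNo, hNT,
    Subgroup.quotientMapOfLE h₁ ⁻¹' A₁ ∩ Subgroup.quotientMapOfLE h₂ ⁻¹' A₂, rfl⟩

variable [IsTopologicalGroup G]

theorem QuotientPreserving.continuous (hT : QuotientPreserving T) : Continuous T := by
  refine continuous_iff_continuousAt.2 fun x U hU ↦ ?_
  obtain ⟨N, -, hNo, hNU, hNT⟩ :=
    hT _ ((continuous_const_mul (T x)).tendsto' 1 (T x) (mul_one _) hU)
  have hxN : (x⁻¹ * ·) ⁻¹' (N : Set G) ∈ 𝓝 x :=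
    (continuous_const_mul x⁻¹).tendsto' x 1 (inv_mul_cancel x) (hNo.mem_nhds N.one_mem)
  exact mem_map.2 (mem_of_superset hxN fun y hy ↦ by simpa using hNU (hNT x y hy))

theorem QuotientPreserving.isTopologicalBasis_factorCylinders (hT : QuotientPreserving T) :
    TopologicalSpace.IsTopologicalBasis (factorCylinders T) := by
  refine TopologicalSpace.isTopologicalBasis_of_isOpen_of_nhds ?_ fun x U hxU hU ↦ ?_
  · rintro _ ⟨N, hN, -, A, rfl⟩
    have := QuotientGroup.discreteTopology hN
    exact (isOpen_discrete A).preimage QuotientGroup.continuous_mk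
  · obtain ⟨N, -, hNo, hNU, hNT⟩ :=
      hT _ ((continuous_const_mul x).tendsto' 1 x (mul_one _) (hU.mem_nhds hxU))
    refine ⟨_, ⟨N, hNo, hNT, {(x : G ⧸ N)}, rfl⟩, rfl, fun y hy ↦ ?_⟩
    simpa using hNU (QuotientGroup.eq.1 (mem_singleton_iff.1 hy).symm)

theorem QuotientPreserving.surjective_of_surjectiveOnQuotients [CompactSpace G] [T1Space G]
    (hT : QuotientPreserving T) (h : SurjectiveOnQuotients T) : Surjective T := by
  intro g
  let ι := {N : Subgroup G // IsOpen (N : Set G) ∧ MapFactorsThrough T N}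
  let fiber : ι → Set G := fun N ↦ {x | (T x : G ⧸ N.1) = g}
  have hclosed (N : ι) : IsClosed (fiber N) := by
    have := QuotientGroup.discreteTopology N.2.1
    exact (isClosed_discrete {(g : G ⧸ N.1)}).preimage
      (QuotientGroup.continuous_mk.comp hT.continuous)
  have hdir : Directed (· ⊇ ·) fiber := fun N₁ N₂ ↦ by
    obtain ⟨N, hNo, hNT, h₁, h₂⟩ := hT.exists_le_inf N₁.2.1 N₂.2.1
    exact ⟨⟨N, hNo, hNT⟩, fun x hx ↦ QuotientGroup.eq.2 (h₁ (QuotientGroup.eq.1 hx)),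
      fun x hx ↦ QuotientGroup.eq.2 (h₂ (QuotientGroup.eq.1 hx))⟩
  have : Nonempty ι := by
    obtain ⟨N, -, hNo, -, hNT⟩ := hT univ univ_mem
    exact ⟨⟨N, hNo, hNT⟩⟩
  have hne (N : ι) : (fiber N).Nonempty := by
    obtain ⟨a, ha⟩ := h N.1 N.2.1 N.2.2 g
    obtain ⟨x, rfl⟩ := QuotientGroup.mk_surjective a
    exact ⟨x, ha⟩
  obtain ⟨x, hx⟩ :=
    IsCompact.nonempty_iInter_of_directed_nonempty_isCompact_isClosed fiber hdir hne
      (fun N ↦ (hclosed N).isCompact) hclosed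
  refine ⟨x, by_contra fun hxg ↦ ?_⟩
  have hU : {(T x)⁻¹ * g}ᶜ ∈ 𝓝 (1 : G) :=
    isOpen_compl_singleton.mem_nhds <| by simpa [eq_comm, inv_mul_eq_one] using hxg
  obtain ⟨N, -, hNo, hsub, hNT⟩ := hT _ hU
  exact hsub (QuotientGroup.eq.1 (mem_iInter.1 hx ⟨N, hNo, hNT⟩)) rfl

theorem QuotientPreserving.surjective_iff_surjectiveOnQuotients [CompactSpace G] [T1Space G]
    (hT : QuotientPreserving T) :
    Surjective T ↔ SurjectiveOnQuotients T :=
  ⟨fun hsurj _ _ hN ↦ hN.lift_surjective hsurj, hT.surjective_of_surjectiveOnQuotients⟩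

variable [MeasurableSpace G] [BorelSpace G] (μ : Measure G)

theorem MapFactorsThrough.lift_surjective_of_measurePreserving [μ.IsMulLeftInvariant]
    [μ.IsOpenPosMeasure] {N : Subgroup G} (hN : IsOpen (N : Set G)) (hT : MapFactorsThrough T N)
    (hμ : MeasurePreserving T μ μ) : Surjective hT.lift := by
  intro q
  have hfiber : μ (T ⁻¹' (QuotientGroup.mk ⁻¹' {q})) ≠ 0 := by
    rw [hμ.measure_preimage
      (measurableSet_preimage_mk_singleton hN.measurableSet q).nullMeasurableSet,
      measure_preimage_mk_singleton]
    exact (hN.measure_pos μ ⟨1, N.one_mem⟩).ne'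
  obtain ⟨x, hx⟩ := nonempty_of_measure_ne_zero hfiber
  exact ⟨x, hx⟩

theorem QuotientPreserving.measurePreserving_of_surjectiveOnQuotients [CompactSpace G]
    [SecondCountableTopology G] [μ.IsMulLeftInvariant] [IsFiniteMeasure μ]
    (hT : QuotientPreserving T) (h : SurjectiveOnQuotients T) : MeasurePreserving T μ μ := by
  have hmeas : Measurable T := hT.continuous.measurable
  have hgen : ‹MeasurableSpace G› = MeasurableSpace.generateFrom (factorCylinders T) :=
    BorelSpace.measurable_eq.trans hT.isTopologicalBasis_factorCylinders.borel_eq_generateFrom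
  refine ⟨hmeas, ext_of_generate_finite _ hgen hT.isPiSystem_factorCylinders ?_ ?_⟩
  · rintro _ ⟨N, hNo, hNT, A, rfl⟩
    have := N.quotient_finite_of_isOpen hNo
    have hA : MeasurableSet (QuotientGroup.mk ⁻¹' A : Set G) :=
      hT.isTopologicalBasis_factorCylinders.isOpen ⟨N, hNo, hNT, A, rfl⟩ |>.measurableSet
    rw [Measure.map_apply hmeas hA,
      hNT.measure_preimage_preimage_mk μ hNo.measurableSet (h N hNo hNT)]
  · rw [Measure.map_apply hmeas .univ, preimage_univ]

theorem QuotientPreserving.measurePreserving_iff_surjectiveOnQuotients [CompactSpace G]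
    [SecondCountableTopology G] [μ.IsHaarMeasure] (hT : QuotientPreserving T) :
    MeasurePreserving T μ μ ↔ SurjectiveOnQuotients T :=
  ⟨fun hμ _ hN hNT ↦ hNT.lift_surjective_of_measurePreserving μ hN hμ,
    hT.measurePreserving_of_surjectiveOnQuotients μ⟩

end Topology

theorem stmt2_general {G : Type*} [Group G] [TopologicalSpace G] [IsTopologicalGroup G]
    [CompactSpace G] [T2Space G]
    [SecondCountableTopology G]
    [MeasurableSpace G] [BorelSpace G]
    (μ : Measure G) [μ.IsHaarMeasure]
    (T : G → G) (hT : QuotientPreserving T) :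
    (∀ S : Set G, MeasurableSet S → μ (T ⁻¹' S) = μ S) ↔ Function.Surjective T := by
  rw [← measurePreserving_iff_measure_preimage hT.continuous.measurable,
    hT.measurePreserving_iff_surjectiveOnQuotients μ, hT.surjective_iff_surjectiveOnQuotients]

theorem stmt2 {G : Type*} [Group G] [TopologicalSpace G] [IsTopologicalGroup G]
    [CompactSpace G] [T2Space G] [TotallyDisconnectedSpace G]
    [SecondCountableTopology G]
    [MeasurableSpace G] [BorelSpace G]
    (μ : Measure G) [μ.IsHaarMeasure] [IsProbabilityMeasure μ]
    (T : G → G) (hT : QuotientPreserving T) :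
    (∀ S : Set G, MeasurableSet S → μ (T ⁻¹' S) = μ S) ↔ Function.Surjective T :=
  stmt2_general μ T hT
end

section
/- Let G be a second-countable profinite group, μ the normalized Haar probability measure on G, and T : G → G a measure-preserving quotient-preserving map. Then there exists a metric d on G such that: (i) d induces the topology of G; (ii) d is left translation invariant, i.e. d(gx, gy) = d(x, y) for all x, y, g ∈ G; (iii) T is an isometry with respect to d; and (iv) the collection of open normal subgroups of G that are closed balls centered at the identity with respect to d (i.e. of the form {x ∈ G : d(1, x) ≤ r} for some r > 0) forms a base of neighborhoods of the identity of G. -/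
/-!
Measure preservation makes `T` act injectively on the cosets of every open subgroup `N` through
which it factors: two disjoint cosets of measure `μ N` cannot both lie in the preimage of a single
coset, which has measure `μ N` as well. So `x⁻¹ * y ∈ N ↔ (T x)⁻¹ * T y ∈ N`. Choose an antitone
sequence `N n` of such open normal subgroups forming a basis at `1` and let `d x y = 2⁻¹ ^ n`,
`n` the first index with `x⁻¹ * y ∉ N n`. This ultrametric is left invariant, induces the
topology, has the `N n` as closed balls about `1`, and depends only on the relations
`x⁻¹ * y ∈ N n`, which `T` preserves.
-/

open MeasureTheory

open Filter Topology

section CosetMap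

variable {G : Type*} [Group G] [MeasurableSpace G] [MeasurableMul G]

theorem MapFactorsThrough.inv_mul_mem_iff {T : G → G} {N : Subgroup G}
    (hT : MapFactorsThrough T N) (μ : Measure G) [μ.IsMulLeftInvariant] [IsFiniteMeasure μ]
    (hMP : ∀ S : Set G, MeasurableSet S → μ (T ⁻¹' S) = μ S)
    (hN : MeasurableSet (N : Set G)) (hN₀ : μ N ≠ 0) (x y : G) :
    x⁻¹ * y ∈ N ↔ (T x)⁻¹ * T y ∈ N := by
  refine ⟨hT x y, fun hTxy => by_contra fun hxy => ?_⟩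
  let coset (g : G) : Set G := (g⁻¹ * ·) ⁻¹' N
  have hμ (g : G) : μ (coset g) = μ N := measure_preimage_mul μ g⁻¹ N
  have hdisj : Disjoint (coset x) (coset y) := Set.disjoint_left.mpr fun z hxz hyz =>
    hxy <| by simpa [mul_assoc] using N.mul_mem hxz (N.inv_mem hyz)
  have hsub : coset x ∪ coset y ⊆ T ⁻¹' coset (T x) := Set.union_subset (hT x) fun z hz =>
    show (T x)⁻¹ * T z ∈ N by simpa [mul_assoc] using N.mul_mem hTxy (hT y z hz)
  have hle : μ N + μ N ≤ μ N := calc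
    μ N + μ N = μ (coset x ∪ coset y) := by
      rw [measure_union hdisj (hN.preimage (measurable_const_mul _)), hμ, hμ]
    _ ≤ μ (T ⁻¹' coset (T x)) := measure_mono hsub
    _ = μ N := by rw [hMP _ (hN.preimage (measurable_const_mul _)), hμ]
  exact hle.not_gt (ENNReal.lt_add_right (measure_ne_top μ _) hN₀)

end CosetMap

theorem QuotientPreserving.exists_antitone_basis {G : Type*} [Group G] [TopologicalSpace G]
    [FirstCountableTopology G] {T : G → G} (hT : QuotientPreserving T) :
    ∃ N : ℕ → Subgroup G,
      (∀ n, (N n).Normal ∧ IsOpen (N n : Set G) ∧ MapFactorsThrough T (N n)) ∧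
      (𝓝 (1 : G)).HasAntitoneBasis fun n => (N n : Set G) := by
  have hbasis : (𝓝 (1 : G)).HasBasis
      (fun N : Subgroup G => N.Normal ∧ IsOpen (N : Set G) ∧ MapFactorsThrough T N)
      (fun N => (N : Set G)) :=
    ⟨fun U => ⟨fun hU => by
      obtain ⟨N, hNn, hNo, hNU, hNT⟩ := hT U hU
      exact ⟨N, ⟨hNn, hNo, hNT⟩, hNU⟩,
      fun ⟨N, ⟨_, hNo, _⟩, hNU⟩ => mem_of_superset (hNo.mem_nhds N.one_mem) hNU⟩⟩
  exact hbasis.exists_antitone_subbasis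

section FiltrationNorm

open scoped Classical

variable {G : Type*} [Group G] (N : ℕ → Subgroup G)

/-- For antitone `N` this is `2⁻¹ ^ n` with `n` the first index such that `g ∉ N n`,
and `0` if there is none. -/
noncomputable def filtrationNorm (g : G) : ℝ :=
  ⨆ n, if g ∈ N n then 0 else (2⁻¹ : ℝ) ^ n

variable {N}

theorem bddAbove_range_filtrationNorm (g : G) :
    BddAbove (Set.range fun n => if g ∈ N n then 0 else (2⁻¹ : ℝ) ^ n) := by
  refine ⟨1, Set.forall_mem_range.mpr fun n => ?_⟩
  split_ifs
  exacts [zero_le_one, pow_le_one₀ (by norm_num) (by norm_num)]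

theorem pow_le_filtrationNorm {g : G} {n : ℕ} (hg : g ∉ N n) :
    (2⁻¹ : ℝ) ^ n ≤ filtrationNorm N g := by
  have := le_ciSup (bddAbove_range_filtrationNorm (N := N) g) n
  rwa [if_neg hg] at this

theorem filtrationNorm_nonneg (g : G) : 0 ≤ filtrationNorm N g := by
  refine le_trans ?_ (le_ciSup (bddAbove_range_filtrationNorm g) 0)
  split_ifs <;> norm_num

theorem filtrationNorm_congr {g h : G} (hgh : ∀ n, g ∈ N n ↔ h ∈ N n) :
    filtrationNorm N g = filtrationNorm N h := by
  simp only [filtrationNorm, hgh]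

theorem filtrationNorm_inv (g : G) : filtrationNorm N g⁻¹ = filtrationNorm N g :=
  filtrationNorm_congr fun _ => inv_mem_iff

theorem filtrationNorm_mul_le (g h : G) :
    filtrationNorm N (g * h) ≤ max (filtrationNorm N g) (filtrationNorm N h) := by
  refine ciSup_le fun n => ?_
  split_ifs with hgh
  · exact le_max_of_le_left (filtrationNorm_nonneg g)
  · by_cases hg : g ∈ N n
    · exact le_max_of_le_right <| pow_le_filtrationNorm fun hh => hgh (N n |>.mul_mem hg hh)
    · exact le_max_of_le_left (pow_le_filtrationNorm hg)

theorem filtrationNorm_mul_le_add (g h : G) :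
    filtrationNorm N (g * h) ≤ filtrationNorm N g + filtrationNorm N h :=
  (filtrationNorm_mul_le g h).trans <|
    max_le_add_of_nonneg (filtrationNorm_nonneg g) (filtrationNorm_nonneg h)

theorem filtrationNorm_le_iff (hN : Antitone N) {g : G} {n : ℕ} :
    filtrationNorm N g ≤ (2⁻¹ : ℝ) ^ (n + 1) ↔ g ∈ N n := by
  refine ⟨fun hle => by_contra fun hg => ?_, fun hg => ciSup_le fun m => ?_⟩
  · exact (pow_lt_pow_right_of_lt_one₀ (by norm_num) (by norm_num) n.lt_succ_self).not_ge
      ((pow_le_filtrationNorm hg).trans hle)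
  · split_ifs with hgm
    · positivity
    · have hnm : n < m := lt_of_not_ge fun hmn => hgm (hN hmn hg)
      exact pow_le_pow_of_le_one (by norm_num) (by norm_num) hnm

theorem filtrationNorm_lt_iff (hN : Antitone N) {g : G} {n : ℕ} :
    filtrationNorm N g < (2⁻¹ : ℝ) ^ n ↔ g ∈ N n := by
  refine ⟨fun hlt => by_contra fun hg => (pow_le_filtrationNorm hg).not_gt hlt, fun hg => ?_⟩
  exact ((filtrationNorm_le_iff hN).mpr hg).trans_lt
    (pow_lt_pow_right_of_lt_one₀ (by norm_num) (by norm_num) n.lt_succ_self)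

variable [TopologicalSpace G]

theorem filtrationNorm_eq_zero_iff [T1Space G]
    (hN : (𝓝 (1 : G)).HasAntitoneBasis fun n => (N n : Set G)) {g : G} :
    filtrationNorm N g = 0 ↔ g = 1 := by
  refine ⟨fun h0 => by_contra fun hg => ?_, fun hg => ?_⟩
  · obtain ⟨n, hn⟩ := hN.mem_iff.mp (isOpen_compl_singleton.mem_nhds (Ne.symm hg))
    exact (pow_pos (by norm_num : (0 : ℝ) < 2⁻¹) n).not_ge
      (h0 ▸ pow_le_filtrationNorm fun hgn => hn hgn rfl)
  · simp [filtrationNorm, hg]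

theorem hasBasis_nhds_filtrationNorm [IsTopologicalGroup G]
    (hN : (𝓝 (1 : G)).HasAntitoneBasis fun n => (N n : Set G)) (x : G) :
    (𝓝 x).HasBasis (fun ε : ℝ => 0 < ε) fun ε => {y | filtrationNorm N (x⁻¹ * y) < ε} := by
  have hanti : Antitone N := fun m n h => hN.antitone h
  have hone : (𝓝 (1 : G)).HasBasis (fun ε : ℝ => 0 < ε) fun ε => {g | filtrationNorm N g < ε} :=
    hN.toHasBasis.to_hasBasis
      (fun n _ => ⟨(2⁻¹ : ℝ) ^ n, by positivity, fun g hg => (filtrationNorm_lt_iff hanti).mp hg⟩)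
      (fun ε hε => by
        obtain ⟨n, hn⟩ := exists_pow_lt_of_lt_one hε (by norm_num : (2⁻¹ : ℝ) < 1)
        exact ⟨n, trivial, fun g hg => ((filtrationNorm_lt_iff hanti).mpr hg).trans hn⟩)
  simpa only [nhds_translation_inv_mul, Set.preimage_ofPred_eq] using hone.comap (x⁻¹ * ·)

end FiltrationNorm

theorem stmt4_general {G : Type*} [Group G] [TopologicalSpace G] [IsTopologicalGroup G]
    [T2Space G] [SecondCountableTopology G]
    [MeasurableSpace G] [BorelSpace G]
    (μ : Measure G) [μ.IsHaarMeasure] [IsProbabilityMeasure μ]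
    (T : G → G) (hT : QuotientPreserving T)
    (hMP : ∀ S : Set G, MeasurableSet S → μ (T ⁻¹' S) = μ S) :
    ∃ d : G → G → ℝ,
      -- d is a metric
      (∀ x y, 0 ≤ d x y) ∧
      (∀ x y, d x y = 0 ↔ x = y) ∧
      (∀ x y, d x y = d y x) ∧
      (∀ x y z, d x z ≤ d x y + d y z) ∧
      -- (i) d induces the topology of G
      (∀ s : Set G, IsOpen s ↔ ∀ x ∈ s, ∃ ε > 0, ∀ y, d x y < ε → y ∈ s) ∧
      -- (ii) d is left translation invariant
      (∀ g x y : G, d (g * x) (g * y) = d x y) ∧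
      -- (iii) T is an isometry with respect to d
      (∀ x y, d (T x) (T y) = d x y) ∧
      -- (iv) the open normal subgroups that are closed balls about the identity form a
      -- base of neighborhoods of the identity
      (∀ U ∈ nhds (1 : G), ∃ N : Subgroup G, N.Normal ∧ IsOpen (N : Set G) ∧
        (∃ r : ℝ, 0 < r ∧ (N : Set G) = {x : G | d 1 x ≤ r}) ∧ (N : Set G) ⊆ U) := by
  obtain ⟨N, hNT, hN⟩ := hT.exists_antitone_basis
  have hanti : Antitone N := fun m n h => hN.antitone h
  have hTN (n : ℕ) (x y : G) : (T x)⁻¹ * T y ∈ N n ↔ x⁻¹ * y ∈ N n :=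
    have hopen := (hNT n).2.1
    ((hNT n).2.2.inv_mul_mem_iff μ hMP hopen.measurableSet
      (hopen.measure_ne_zero μ ⟨1, (N n).one_mem⟩) x y).symm
  refine ⟨fun x y => filtrationNorm N (x⁻¹ * y), ?_, ?_, ?_, ?_, ?_, ?_, ?_, ?_⟩ <;> beta_reduce
  · exact fun x y => filtrationNorm_nonneg _
  · intro x y
    rw [filtrationNorm_eq_zero_iff hN, inv_mul_eq_one]
  · intro x y
    rw [← filtrationNorm_inv, mul_inv_rev, inv_inv]
  · intro x y z
    simpa only [mul_assoc, mul_inv_cancel_left] using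
      filtrationNorm_mul_le_add (N := N) (x⁻¹ * y) (y⁻¹ * z)
  · intro s
    simp only [isOpen_iff_mem_nhds, (hasBasis_nhds_filtrationNorm hN _).mem_iff]
    rfl
  · intro g x y
    rw [mul_inv_rev, mul_assoc, inv_mul_cancel_left]
  · exact fun x y => filtrationNorm_congr fun n => hTN n x y
  · intro U hU
    obtain ⟨n, hn⟩ := hN.mem_iff.mp hU
    refine ⟨N n, (hNT n).1, (hNT n).2.1, ⟨(2⁻¹ : ℝ) ^ (n + 1), by positivity, ?_⟩, hn⟩
    ext g
    simp only [SetLike.mem_coe, Set.mem_ofPred_eq, inv_one, one_mul, filtrationNorm_le_iff hanti]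

theorem stmt4 {G : Type*} [Group G] [TopologicalSpace G] [IsTopologicalGroup G]
    [CompactSpace G] [T2Space G] [TotallyDisconnectedSpace G] [SecondCountableTopology G]
    [MeasurableSpace G] [BorelSpace G]
    (μ : Measure G) [μ.IsHaarMeasure] [IsProbabilityMeasure μ]
    (T : G → G) (hT : QuotientPreserving T)
    (hMP : ∀ S : Set G, MeasurableSet S → μ (T ⁻¹' S) = μ S) :
    ∃ d : G → G → ℝ,
      -- d is a metric
      (∀ x y, 0 ≤ d x y) ∧
      (∀ x y, d x y = 0 ↔ x = y) ∧
      (∀ x y, d x y = d y x) ∧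
      (∀ x y z, d x z ≤ d x y + d y z) ∧
      -- (i) d induces the topology of G
      (∀ s : Set G, IsOpen s ↔ ∀ x ∈ s, ∃ ε > 0, ∀ y, d x y < ε → y ∈ s) ∧
      -- (ii) d is left translation invariant
      (∀ g x y : G, d (g * x) (g * y) = d x y) ∧
      -- (iii) T is an isometry with respect to d
      (∀ x y, d (T x) (T y) = d x y) ∧
      -- (iv) the open normal subgroups that are closed balls about the identity form a
      -- base of neighborhoods of the identity
      (∀ U ∈ nhds (1 : G), ∃ N : Subgroup G, N.Normal ∧ IsOpen (N : Set G) ∧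
        (∃ r : ℝ, 0 < r ∧ (N : Set G) = {x : G | d 1 x ≤ r}) ∧ (N : Set G) ⊆ U) :=
  stmt4_general μ T hT hMP
end

section
/- Let G be a second-countable profinite group, μ the normalized Haar probability measure on G, and T : G → G a map. Suppose there exists a metric d on G such that: (i) d induces the topology of G; (ii) d is left translation invariant, i.e. d(gx, gy) = d(x, y) for all x, y, g ∈ G; (iii) T is an isometry with respect to d; and (iv) the collection of open normal subgroups of G that are closed balls centered at the identity with respect to d forms a base of neighborhoods of the identity of G. Then T is a quotient-preserving map and T is measure-preserving with respect to μ. -/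
/-!
For a closed-ball subgroup `N` of radius `r`, left invariance of `d` gives
`x⁻¹ * y ∈ N ↔ d x y ≤ r`, so the isometry `T` preserves and reflects congruence modulo `N`.
It therefore induces an injective, hence (as `G ⧸ N` is finite) bijective, self-map of `G ⧸ N`,
and the preimage of a coset of `N` is again a coset of `N`, of the same Haar measure. Closed balls
are nested, so their cosets form a π-system; being a basis of the second countable topology, they
generate the Borel σ-algebra, on which `μ.map T` and `μ` therefore agree.
-/

open MeasureTheory

open MeasurableSpace Topology Pointwise

section Cosets

variable {G : Type*} [Group G]

theorem Subgroup.exists_preimage_smul_eq_smul {N : Subgroup G} [Finite (G ⧸ N)] {T : G → G}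
    (hT : ∀ x y, (T x)⁻¹ * T y ∈ N ↔ x⁻¹ * y ∈ N) (g : G) :
    ∃ y : G, T ⁻¹' (g • (N : Set G)) = y • (N : Set G) := by
  let f : G ⧸ N → G ⧸ N := Quotient.map' T fun x y h => by
    rw [QuotientGroup.leftRel_apply] at h ⊢
    exact (hT x y).2 h
  have hf : f.Injective := by
    rintro ⟨x⟩ ⟨y⟩ h
    exact QuotientGroup.eq.2 ((hT x y).1 (QuotientGroup.eq.1 h))
  obtain ⟨⟨y⟩, hy⟩ := Finite.surjective_of_injective hf (g : G ⧸ N)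
  have hg : g • (N : Set G) = T y • (N : Set G) :=
    (leftCoset_eq_iff N).2 (QuotientGroup.eq.1 hy.symm)
  refine ⟨y, Set.ext fun z => ?_⟩
  rw [Set.mem_preimage, hg, mem_leftCoset_iff, mem_leftCoset_iff]
  exact hT y z

def cosetsOf (𝒩 : Set (Subgroup G)) : Set (Set G) :=
  {s | ∃ N ∈ 𝒩, ∃ g : G, g • (N : Set G) = s}

theorem isPiSystem_cosetsOf {𝒩 : Set (Subgroup G)} (h𝒩 : IsChain (· ≤ ·) 𝒩) :
    IsPiSystem (cosetsOf 𝒩) := by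
  rintro _ ⟨N, hN, g, rfl⟩ _ ⟨M, hM, h, rfl⟩ ⟨z, hzg, hzh⟩
  rw [(leftCoset_eq_iff N).2 ((mem_leftCoset_iff g).1 hzg),
    (leftCoset_eq_iff M).2 ((mem_leftCoset_iff h).1 hzh), ← Set.smul_set_inter]
  rcases h𝒩.total hN hM with hNM | hMN
  · exact ⟨N, hN, z, by rw [Set.inter_eq_left.2 (SetLike.coe_subset_coe.2 hNM)]⟩
  · exact ⟨M, hM, z, by rw [Set.inter_eq_right.2 (SetLike.coe_subset_coe.2 hMN)]⟩

theorem isTopologicalBasis_cosetsOf [TopologicalSpace G] [IsTopologicalGroup G]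
    {𝒩 : Set (Subgroup G)} (hopen : ∀ N ∈ 𝒩, IsOpen (N : Set G))
    (hbasis : ∀ U ∈ 𝓝 (1 : G), ∃ N ∈ 𝒩, (N : Set G) ⊆ U) :
    TopologicalSpace.IsTopologicalBasis (cosetsOf 𝒩) := by
  refine TopologicalSpace.isTopologicalBasis_of_isOpen_of_nhds ?_ fun x U hxU hU => ?_
  · rintro _ ⟨N, hN, g, rfl⟩
    exact (hopen N hN).smul g
  · obtain ⟨N, hN, hNU⟩ := hbasis ((x • ·) ⁻¹' U)
      ((hU.preimage (continuous_const_smul x)).mem_nhds (by simpa using hxU))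
    refine ⟨x • (N : Set G), ⟨N, hN, x, rfl⟩, Set.mem_smul_set.2 ⟨1, N.one_mem, mul_one x⟩, ?_⟩
    rintro _ ⟨n, hn, rfl⟩
    exact hNU hn

end Cosets

theorem measurePreserving_of_inv_mul_mem_iff {G : Type*} [Group G] [TopologicalSpace G]
    [IsTopologicalGroup G] [CompactSpace G] [SecondCountableTopology G] [MeasurableSpace G]
    [BorelSpace G] {μ : Measure G} [μ.IsMulLeftInvariant] [IsFiniteMeasure μ]
    {𝒩 : Set (Subgroup G)} (hchain : IsChain (· ≤ ·) 𝒩) (hopen : ∀ N ∈ 𝒩, IsOpen (N : Set G))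
    (hbasis : ∀ U ∈ 𝓝 (1 : G), ∃ N ∈ 𝒩, (N : Set G) ⊆ U) {T : G → G}
    (hT : ∀ N ∈ 𝒩, ∀ x y, (T x)⁻¹ * T y ∈ N ↔ x⁻¹ * y ∈ N) :
    MeasurePreserving T μ μ := by
  have hB := isTopologicalBasis_cosetsOf hopen hbasis
  have hgen : ‹MeasurableSpace G› = generateFrom (cosetsOf 𝒩) := by
    rw [BorelSpace.measurable_eq (α := G), hB.borel_eq_generateFrom]
  have hpre : ∀ s ∈ cosetsOf 𝒩, ∃ t ∈ cosetsOf 𝒩, T ⁻¹' s = t ∧ μ t = μ s := by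
    rintro _ ⟨N, hN, g, rfl⟩
    have := N.quotient_finite_of_isOpen (hopen N hN)
    obtain ⟨y, hy⟩ := N.exists_preimage_smul_eq_smul (hT N hN) g
    exact ⟨_, ⟨N, hN, y, rfl⟩, hy, by rw [measure_smul, measure_smul]⟩
  have hmeas : Measurable T := Measurable.of_le_map <| by
    conv_lhs => rw [hgen]
    refine generateFrom_le fun s hs => ?_
    obtain ⟨t, ht, hst, -⟩ := hpre s hs
    show MeasurableSet (T ⁻¹' s)
    rw [hst]
    exact (hB.isOpen ht).measurableSet
  refine ⟨hmeas, ext_of_generate_finite _ hgen (isPiSystem_cosetsOf hchain) (fun s hs => ?_) ?_⟩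
  · obtain ⟨t, -, hst, hμ⟩ := hpre s hs
    rw [Measure.map_apply hmeas (hB.isOpen hs).measurableSet, hst, hμ]
  · rw [Measure.map_apply hmeas MeasurableSet.univ, Set.preimage_univ]

section ClosedBall

variable {G : Type*} [Group G] {d : G → G → ℝ}

theorem inv_mul_mem_iff_le_of_coe_eq_closedBall (hinv : ∀ g x y : G, d (g * x) (g * y) = d x y)
    {N : Subgroup G} {r : ℝ} (hN : (N : Set G) = {x | d 1 x ≤ r}) (x y : G) :
    x⁻¹ * y ∈ N ↔ d x y ≤ r := by
  rw [← SetLike.mem_coe, hN, Set.mem_ofPred_eq, ← hinv x, mul_one, mul_inv_cancel_left]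

theorem isChain_closedBallSubgroups :
    IsChain (· ≤ ·) {N : Subgroup G | ∃ r : ℝ, (N : Set G) = {x | d 1 x ≤ r}} := by
  rintro N ⟨r, hN⟩ M ⟨s, hM⟩ -
  simp only [← SetLike.coe_subset_coe, hN, hM, Set.ofPred_subset_ofPred]
  rcases le_total r s with hrs | hsr
  · exact Or.inl fun x hx => hx.trans hrs
  · exact Or.inr fun x hx => hx.trans hsr

end ClosedBall

theorem stmt5_general {G : Type*} [Group G] [TopologicalSpace G] [IsTopologicalGroup G]
    [CompactSpace G] [SecondCountableTopology G]
    [MeasurableSpace G] [BorelSpace G]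
    (μ : Measure G) [μ.IsHaarMeasure]
    (T : G → G) (d : G → G → ℝ)
    -- (ii) d is left translation invariant
    (hinv : ∀ g x y : G, d (g * x) (g * y) = d x y)
    -- (iii) T is an isometry with respect to d
    (hiso : ∀ x y, d (T x) (T y) = d x y)
    -- (iv) the open normal subgroups that are closed balls about the identity form a
    -- base of neighborhoods of the identity
    (hball : ∀ U ∈ nhds (1 : G), ∃ N : Subgroup G, N.Normal ∧ IsOpen (N : Set G) ∧
      (∃ r : ℝ, 0 < r ∧ (N : Set G) = {x : G | d 1 x ≤ r}) ∧ (N : Set G) ⊆ U) :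
    QuotientPreserving T ∧ ∀ S : Set G, MeasurableSet S → μ (T ⁻¹' S) = μ S := by
  set 𝒩 := {N : Subgroup G | IsOpen (N : Set G) ∧ ∃ r : ℝ, (N : Set G) = {x | d 1 x ≤ r}}
  have hT : ∀ N ∈ 𝒩, ∀ x y, (T x)⁻¹ * T y ∈ N ↔ x⁻¹ * y ∈ N := by
    rintro N ⟨-, r, hN⟩ x y
    rw [inv_mul_mem_iff_le_of_coe_eq_closedBall hinv hN,
      inv_mul_mem_iff_le_of_coe_eq_closedBall hinv hN, hiso]
  refine ⟨fun U hU => ?_, fun S hS => ?_⟩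
  · obtain ⟨N, hNormal, hopen, ⟨r, -, hN⟩, hNU⟩ := hball U hU
    exact ⟨N, hNormal, hopen, hNU, fun x y => (hT N ⟨hopen, r, hN⟩ x y).2⟩
  · have hbasis : ∀ U ∈ 𝓝 (1 : G), ∃ N ∈ 𝒩, (N : Set G) ⊆ U := fun U hU => by
      obtain ⟨N, -, hopen, ⟨r, -, hN⟩, hNU⟩ := hball U hU
      exact ⟨N, ⟨hopen, r, hN⟩, hNU⟩
    have hchain : IsChain (· ≤ ·) 𝒩 := isChain_closedBallSubgroups.mono fun _ hN => hN.2
    exact (measurePreserving_of_inv_mul_mem_iff hchain (fun _ hN => hN.1) hbasis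
      hT).measure_preimage hS.nullMeasurableSet

theorem stmt5 {G : Type*} [Group G] [TopologicalSpace G] [IsTopologicalGroup G]
    [CompactSpace G] [T2Space G] [TotallyDisconnectedSpace G] [SecondCountableTopology G]
    [MeasurableSpace G] [BorelSpace G]
    (μ : Measure G) [μ.IsHaarMeasure] [IsProbabilityMeasure μ]
    (T : G → G) (d : G → G → ℝ)
    -- d is a metric
    (hpos : ∀ x y, 0 ≤ d x y)
    (heq : ∀ x y, d x y = 0 ↔ x = y)
    (hsymm : ∀ x y, d x y = d y x)
    (htri : ∀ x y z, d x z ≤ d x y + d y z)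
    -- (i) d induces the topology of G
    (htop : ∀ s : Set G, IsOpen s ↔ ∀ x ∈ s, ∃ ε > 0, ∀ y, d x y < ε → y ∈ s)
    -- (ii) d is left translation invariant
    (hinv : ∀ g x y : G, d (g * x) (g * y) = d x y)
    -- (iii) T is an isometry with respect to d
    (hiso : ∀ x y, d (T x) (T y) = d x y)
    -- (iv) the open normal subgroups that are closed balls about the identity form a
    -- base of neighborhoods of the identity
    (hball : ∀ U ∈ nhds (1 : G), ∃ N : Subgroup G, N.Normal ∧ IsOpen (N : Set G) ∧
      (∃ r : ℝ, 0 < r ∧ (N : Set G) = {x : G | d 1 x ≤ r}) ∧ (N : Set G) ⊆ U) :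
    QuotientPreserving T ∧ ∀ S : Set G, MeasurableSet S → μ (T ⁻¹' S) = μ S :=
  stmt5_general μ T d hinv hiso hball
end

section
/- Let G be a compact Hausdorff topological group with normalized Haar probability measure μ, and let T : G → G be a measure-preserving map. Suppose there exists an open normal subgroup N of G with N ≠ G such that T factors through the quotient map π_N : G → G/N. Then T is not totally ergodic: there exists n ≥ 1 such that the n-fold iterate T^n is not ergodic with respect to μ. -/
open MeasureTheory Function

/-! The factor map `f` of `T` on the finite discrete space `G ⧸ N` is surjective, because every
coset has positive measure and `T` preserves measure; hence `f` is a permutation and some iterate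
`f^[n]` is the identity. Then every coset is `T^[n]`-invariant, and since there are at least two
cosets, each of positive measure, the coset `N` has measure strictly between `0` and `1`. -/

namespace MapFactorsThrough

variable {G : Type*} [Group G] {T : G → G} {N : Subgroup G}

def quotientMap (hfac : MapFactorsThrough T N) : G ⧸ N → G ⧸ N :=
  Quotient.map' T fun x y hxy => by
    rw [QuotientGroup.leftRel_apply] at hxy ⊢
    exact hfac x y hxy

theorem semiconj_mk (hfac : MapFactorsThrough T N) :
    Semiconj (QuotientGroup.mk : G → G ⧸ N) T hfac.quotientMap :=
  fun _ => rfl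

end MapFactorsThrough

theorem Finite.exists_iterate_eq_id_of_injective {Q : Type*} [Finite Q] {f : Q → Q}
    (hf : Injective f) : ∃ n, 1 ≤ n ∧ f^[n] = id := by
  let σ : Equiv.Perm Q := Equiv.ofBijective f hf.bijective_of_finite
  refine ⟨orderOf σ, orderOf_pos σ, ?_⟩
  rw [← Equiv.coe_ofBijective f hf.bijective_of_finite, ← Equiv.Perm.coe_pow,
    pow_orderOf_eq_one]
  rfl

section FiniteDiscreteFactor

variable {X Q : Type*} [TopologicalSpace X] [MeasurableSpace X] {μ : Measure X}
  [TopologicalSpace Q] [DiscreteTopology Q] {π : X → Q}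

theorem Continuous.measurableSet_preimage_singleton [OpensMeasurableSpace X]
    (hπ : Continuous π) (q : Q) : MeasurableSet (π ⁻¹' {q}) :=
  ((isOpen_discrete _).preimage hπ).measurableSet

theorem Continuous.measure_preimage_singleton_ne_zero [μ.IsOpenPosMeasure] (hπ : Continuous π)
    (hπs : Surjective π) (q : Q) : μ (π ⁻¹' {q}) ≠ 0 :=
  ((isOpen_discrete _).preimage hπ).measure_ne_zero μ (hπs q)

theorem Function.Semiconj.surjective_of_measure_preimage [OpensMeasurableSpace X]
    [μ.IsOpenPosMeasure] {T : X → X} {f : Q → Q} (hsemi : Semiconj π T f) (hπ : Continuous π)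
    (hπs : Surjective π) (hT : ∀ S, MeasurableSet S → μ (T ⁻¹' S) = μ S) : Surjective f := by
  intro q
  have hpos : μ (T ⁻¹' (π ⁻¹' {q})) ≠ 0 := by
    rw [hT _ (hπ.measurableSet_preimage_singleton q)]
    exact hπ.measure_preimage_singleton_ne_zero hπs q
  obtain ⟨x, hx⟩ := nonempty_of_measure_ne_zero hpos
  exact ⟨π x, (hsemi x).symm.trans hx⟩

theorem Function.Semiconj.exists_invariant_measure_ne_zero_ne_one [OpensMeasurableSpace X]
    [IsProbabilityMeasure μ] [μ.IsOpenPosMeasure] [Nontrivial Q] {T : X → X} {f : Q → Q}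
    (hsemi : Semiconj π T f) (hπ : Continuous π) (hπs : Surjective π) {n : ℕ}
    (hn : f^[n] = id) : ∃ S, MeasurableSet S ∧ T^[n] ⁻¹' S = S ∧ μ S ≠ 0 ∧ μ S ≠ 1 := by
  obtain ⟨q, q', hqq'⟩ := exists_pair_ne Q
  have hS := hπ.measurableSet_preimage_singleton q
  refine ⟨π ⁻¹' {q}, hS, ?_, hπ.measure_preimage_singleton_ne_zero hπs q, ?_⟩
  · ext x
    simp only [Set.mem_preimage, (hsemi.iterate_right n).eq x, hn, id]
  · rw [Ne, ← prob_compl_eq_zero_iff hS]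
    refine fun h0 => hπ.measure_preimage_singleton_ne_zero hπs q' (measure_mono_null ?_ h0)
    exact fun x hx h => hqq' (h.symm.trans hx)

end FiniteDiscreteFactor

theorem stmt7_general {G : Type*} [Group G] [TopologicalSpace G] [IsTopologicalGroup G]
    [CompactSpace G] [MeasurableSpace G] [BorelSpace G]
    (μ : Measure G) [μ.IsHaarMeasure] [IsProbabilityMeasure μ]
    (T : G → G)
    (hMP : ∀ S : Set G, MeasurableSet S → μ (T ⁻¹' S) = μ S)
    (N : Subgroup G) (hopen : IsOpen (N : Set G)) (hne : N ≠ ⊤)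
    (hfac : MapFactorsThrough T N) :
    ∃ n : ℕ, 1 ≤ n ∧
      ¬ (∀ S : Set G, MeasurableSet S → T^[n] ⁻¹' S = S → μ S = 0 ∨ μ S = 1) := by
  have := QuotientGroup.discreteTopology hopen
  have := N.quotient_finite_of_isOpen hopen
  have := QuotientGroup.nontrivial_iff.mpr hne
  have hπ : Continuous (QuotientGroup.mk : G → G ⧸ N) := QuotientGroup.continuous_mk
  have hsurj := hfac.semiconj_mk.surjective_of_measure_preimage hπ QuotientGroup.mk_surjective hMP
  obtain ⟨n, hn, hid⟩ :=
    Finite.exists_iterate_eq_id_of_injective (Finite.injective_iff_surjective.mpr hsurj)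
  obtain ⟨S, hS, hinv, h0, h1⟩ :=
    hfac.semiconj_mk.exists_invariant_measure_ne_zero_ne_one (μ := μ) hπ
      QuotientGroup.mk_surjective hid
  exact ⟨n, hn, fun H => (H S hS hinv).elim h0 h1⟩

theorem stmt7 {G : Type*} [Group G] [TopologicalSpace G] [IsTopologicalGroup G]
    [CompactSpace G] [T2Space G] [MeasurableSpace G] [BorelSpace G]
    (μ : Measure G) [μ.IsHaarMeasure] [IsProbabilityMeasure μ]
    (T : G → G) (hmeas : Measurable T)
    (hMP : ∀ S : Set G, MeasurableSet S → μ (T ⁻¹' S) = μ S)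
    (N : Subgroup G) (hN : N.Normal) (hopen : IsOpen (N : Set G)) (hne : N ≠ ⊤)
    (hfac : MapFactorsThrough T N) :
    ∃ n : ℕ, 1 ≤ n ∧
      ¬ (∀ S : Set G, MeasurableSet S → T^[n] ⁻¹' S = S → μ S = 0 ∨ μ S = 1) :=
  stmt7_general μ T hMP N hopen hne hfac
end

section
/- Let p be a prime and let T : ℤ_p → ℤ_p be a 1-Lipschitz map on the p-adic integers, i.e. |T x − T y|_p ≤ |x − y|_p for all x, y ∈ ℤ_p. Then T preserves the normalized Haar probability measure on ℤ_p if and only if T is surjective, and in that case T is an isometry: |T x − T y|_p = |x − y|_p for all x, y ∈ ℤ_p. -/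
/-!
A 1-Lipschitz map `T` of `ℤ_[p]` respects congruences modulo every `p ^ n`, so it induces maps
`T_n` of the finite rings `ZMod (p ^ n)`. If `T` is surjective, every `T_n` is a surjection of a
finite set onto itself, hence injective; thus `T x ≡ T y` and `x ≡ y` modulo `p ^ n` are
equivalent for all `n`, i.e. `T` is an isometry. A surjective isometry maps closed balls onto
closed balls of the same radius, and a Haar measure gives the same mass to all balls of a given
radius; since closed balls form a π-system generating the Borel sets of an ultrametric space,
`T` preserves the measure. Conversely, if `T` preserves the measure, the complement of the
compact image of `T` is an open set of measure `μ ∅ = 0`, hence empty.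
-/

open MeasureTheory Metric

noncomputable instance (p : ℕ) [Fact p.Prime] : MeasurableSpace ℤ_[p] := borel _
instance (p : ℕ) [Fact p.Prime] : BorelSpace ℤ_[p] := ⟨rfl⟩

theorem surjective_of_measure_preimage_eq {X : Type*} [TopologicalSpace X] [CompactSpace X]
    [T2Space X] [MeasurableSpace X] [OpensMeasurableSpace X] (μ : Measure X)
    [μ.IsOpenPosMeasure] {T : X → X} (hT : Continuous T)
    (h : ∀ s, MeasurableSet s → μ (T ⁻¹' s) = μ s) : Function.Surjective T := by
  have hopen : IsOpen (Set.range T)ᶜ := (isCompact_range hT).isClosed.isOpen_compl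
  have hnull : μ (Set.range T)ᶜ = 0 := by
    rw [← h _ hopen.measurableSet, Set.preimage_compl, Set.preimage_range, Set.compl_univ,
      measure_empty]
  exact Set.range_eq_univ.mp (Set.compl_empty_iff.mp ((hopen.measure_eq_zero_iff μ).mp hnull))

namespace IsUltrametricDist

variable {X : Type*} [PseudoMetricSpace X] [IsUltrametricDist X]

theorem isPiSystem_closedBall : IsPiSystem {s : Set X | ∃ x, ∃ r > 0, closedBall x r = s} := by
  rintro _ ⟨x, r, hr, rfl⟩ _ ⟨y, s, hs, rfl⟩ hne
  rcases closedBall_subset_trichotomy x y r s with h | h | h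
  · exact ⟨x, r, hr, (Set.inter_eq_left.mpr h).symm⟩
  · exact ⟨y, s, hs, (Set.inter_eq_right.mpr h).symm⟩
  · exact absurd hne (Set.not_nonempty_iff_eq_empty.mpr h.inter_eq)

theorem isTopologicalBasis_closedBall :
    TopologicalSpace.IsTopologicalBasis {s : Set X | ∃ x, ∃ r > 0, closedBall x r = s} := by
  refine TopologicalSpace.isTopologicalBasis_of_isOpen_of_nhds ?_ fun a u hau hu => ?_
  · rintro _ ⟨x, r, hr, rfl⟩
    exact isOpen_closedBall x hr.ne'
  · obtain ⟨r, hr, hsub⟩ := nhds_basis_closedBall.mem_iff.mp (hu.mem_nhds hau)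
    exact ⟨closedBall a r, ⟨a, r, hr, rfl⟩, mem_closedBall_self hr.le, hsub⟩

theorem measure_ext_of_closedBall [MeasurableSpace X] [BorelSpace X]
    [SecondCountableTopology X] {μ ν : Measure X} [IsFiniteMeasure μ]
    (h : ∀ x, ∀ r > 0, μ (closedBall x r) = ν (closedBall x r)) (huniv : μ .univ = ν .univ) :
    μ = ν := by
  refine ext_of_generate_finite _ ?_ isPiSystem_closedBall ?_ huniv
  · rw [BorelSpace.measurable_eq (α := X), isTopologicalBasis_closedBall.borel_eq_generateFrom]
  · rintro _ ⟨x, r, hr, rfl⟩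
    exact h x r hr

theorem measurePreserving_of_isometry_of_surjective {E : Type*} [NormedAddCommGroup E]
    [IsUltrametricDist E] [MeasurableSpace E] [BorelSpace E] [SecondCountableTopology E]
    (μ : Measure E) [μ.IsAddHaarMeasure] [IsFiniteMeasure μ] {T : E → E} (hT : Isometry T)
    (hs : Function.Surjective T) : MeasurePreserving T μ μ := by
  have hmeas : Measurable T := hT.continuous.measurable
  refine ⟨hmeas, (measure_ext_of_closedBall (fun y r _ => ?_) ?_).symm⟩
  · obtain ⟨x, rfl⟩ := hs y
    rw [Measure.map_apply hmeas measurableSet_closedBall, hT.preimage_closedBall,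
      Measure.addHaar_closedBall_center μ (T x),
      Measure.addHaar_closedBall_center μ x]
  · rw [Measure.map_apply hmeas .univ, Set.preimage_univ]

end IsUltrametricDist

namespace PadicInt

variable {p : ℕ} [Fact p.Prime]

theorem toZModPow_eq_iff_norm_sub_le (n : ℕ) (x y : ℤ_[p]) :
    toZModPow n x = toZModPow n y ↔ ‖x - y‖ ≤ (p : ℝ) ^ (-n : ℤ) := by
  rw [norm_le_pow_iff_mem_span_pow, ← ker_toZModPow, RingHom.mem_ker, map_sub, sub_eq_zero]

theorem norm_le_of_forall_norm_le_pow {a b : ℤ_[p]}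
    (h : ∀ n : ℕ, ‖b‖ ≤ (p : ℝ) ^ (-n : ℤ) → ‖a‖ ≤ (p : ℝ) ^ (-n : ℤ)) : ‖a‖ ≤ ‖b‖ := by
  by_cases hb : b = 0
  · have ha : a = 0 := ext_of_toZModPow.mp fun n =>
      (toZModPow_eq_iff_norm_sub_le n a 0).mpr (by simpa [hb] using h n)
    simp [ha]
  · rw [norm_eq_zpow_neg_valuation hb] at h ⊢
    exact h _ le_rfl

theorem toZModPow_natCast_val (n : ℕ) (c : ZMod (p ^ n)) :
    toZModPow n (c.val : ℤ_[p]) = c := by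
  rw [map_natCast, ZMod.natCast_zmod_val]

variable (T : ℤ_[p] → ℤ_[p])

/-- `c.val` is one lift of `c`; for 1-Lipschitz `T` any other lift gives the same value. -/
noncomputable def residueMap (n : ℕ) (c : ZMod (p ^ n)) : ZMod (p ^ n) :=
  toZModPow n (T (c.val : ℤ_[p]))

variable {T}

theorem toZModPow_apply_eq_residueMap (hT : ∀ x y, ‖T x - T y‖ ≤ ‖x - y‖) (n : ℕ)
    (x : ℤ_[p]) :
    toZModPow n (T x) = residueMap T n (toZModPow n x) := by
  rw [residueMap, toZModPow_eq_iff_norm_sub_le]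
  refine (hT _ _).trans ((toZModPow_eq_iff_norm_sub_le n _ _).mp ?_)
  rw [toZModPow_natCast_val]

theorem residueMap_bijective (hT : ∀ x y, ‖T x - T y‖ ≤ ‖x - y‖) (hs : Function.Surjective T)
    (n : ℕ) : Function.Bijective (residueMap T n) := by
  refine (Fintype.bijective_iff_surjective_and_card _).mpr ⟨fun c => ?_, rfl⟩
  obtain ⟨x, hx⟩ := hs (c.val : ℤ_[p])
  exact ⟨toZModPow n x, by rw [← toZModPow_apply_eq_residueMap hT, hx, toZModPow_natCast_val]⟩

theorem isometry_of_surjective (hT : ∀ x y, ‖T x - T y‖ ≤ ‖x - y‖)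
    (hs : Function.Surjective T) : Isometry T := by
  refine Isometry.of_dist_eq fun x y => ?_
  rw [dist_eq_norm, dist_eq_norm]
  refine le_antisymm (hT x y) (norm_le_of_forall_norm_le_pow fun n hn => ?_)
  rw [← toZModPow_eq_iff_norm_sub_le] at hn ⊢
  rw [toZModPow_apply_eq_residueMap hT, toZModPow_apply_eq_residueMap hT] at hn
  exact (residueMap_bijective hT hs n).injective hn

end PadicInt

theorem stmt8_general {p : ℕ} [Fact p.Prime]
    (μ : Measure ℤ_[p]) [μ.IsAddHaarMeasure]
    (T : ℤ_[p] → ℤ_[p]) (hlip : ∀ x y : ℤ_[p], ‖T x - T y‖ ≤ ‖x - y‖) :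
    ((∀ S : Set ℤ_[p], MeasurableSet S → μ (T ⁻¹' S) = μ S) ↔ Function.Surjective T) ∧
    (Function.Surjective T → ∀ x y : ℤ_[p], ‖T x - T y‖ = ‖x - y‖) := by
  have hcont : Continuous T := (LipschitzWith.of_dist_le_mul (K := 1) fun x y => by
    simpa only [dist_eq_norm, NNReal.coe_one, one_mul] using hlip x y).continuous
  have hiso : Function.Surjective T → Isometry T := PadicInt.isometry_of_surjective hlip
  refine ⟨⟨surjective_of_measure_preimage_eq μ hcont, fun hs S hS => ?_⟩, fun hs x y => ?_⟩
  · exact (IsUltrametricDist.measurePreserving_of_isometry_of_surjective μ (hiso hs) hs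
      ).measure_preimage hS.nullMeasurableSet
  · simpa only [dist_eq_norm] using (hiso hs).dist_eq x y

theorem stmt8 {p : ℕ} [Fact p.Prime]
    (μ : Measure ℤ_[p]) [μ.IsAddHaarMeasure] [IsProbabilityMeasure μ]
    (T : ℤ_[p] → ℤ_[p]) (hlip : ∀ x y : ℤ_[p], ‖T x - T y‖ ≤ ‖x - y‖) :
    ((∀ S : Set ℤ_[p], MeasurableSet S → μ (T ⁻¹' S) = μ S) ↔ Function.Surjective T) ∧
    (Function.Surjective T → ∀ x y : ℤ_[p], ‖T x - T y‖ = ‖x - y‖) :=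
  stmt8_general μ T hlip
end

section
/- Let G be a compact Hausdorff topological group and T : G → G a surjective continuous group homomorphism. If N is an open normal subgroup of G with T(N) ⊆ N, then T⁻¹(N) = N. -/
namespace Subgroup

variable {G : Type*} [Group G]

theorem eq_of_le_of_index_eq {H K : Subgroup G} [H.FiniteIndex] (hle : H ≤ K)
    (hidx : K.index = H.index) : H = K :=
  hle.eq_of_not_lt fun hlt => (index_strictAnti hlt).ne hidx

theorem comap_eq_self_of_le_comap {f : G →* G} (hf : Function.Surjective f) {H : Subgroup G}
    [H.FiniteIndex] (hle : H ≤ H.comap f) : H.comap f = H :=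
  (eq_of_le_of_index_eq hle (index_comap_of_surjective H hf)).symm

end Subgroup

theorem stmt10_general {G : Type*} [Group G] [TopologicalSpace G] [IsTopologicalGroup G]
    [CompactSpace G]
    (T : G →* G) (hs : Function.Surjective T)
    (N : Subgroup G) (ho : IsOpen (N : Set G))
    (hTN : ⇑T '' (N : Set G) ⊆ (N : Set G)) :
    ⇑T ⁻¹' (N : Set G) = (N : Set G) := by
  have : Finite (G ⧸ N) := Subgroup.quotient_finite_of_isOpen N ho
  have : N.FiniteIndex := Subgroup.finiteIndex_of_finite_quotient
  have hle : N ≤ N.comap T := fun x hx => hTN ⟨x, hx, rfl⟩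
  exact congrArg SetLike.coe (Subgroup.comap_eq_self_of_le_comap hs hle)

theorem stmt10 {G : Type*} [Group G] [TopologicalSpace G] [IsTopologicalGroup G]
    [CompactSpace G] [T2Space G]
    (T : G →* G) (hc : Continuous T) (hs : Function.Surjective T)
    (N : Subgroup G) (hN : N.Normal) (ho : IsOpen (N : Set G))
    (hTN : ⇑T '' (N : Set G) ⊆ (N : Set G)) :
    ⇑T ⁻¹' (N : Set G) = (N : Set G) :=
  stmt10_general T hs N ho hTN
end

section
/- Let G be a compact Hausdorff topological group with normalized Haar probability measure μ, and let T : G → G be a surjective continuous group homomorphism. Suppose there exists an open normal subgroup N of G with N ≠ G and T(N) ⊆ N. Then T is not ergodic with respect to μ. -/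
/-!
An open subgroup `N` of a compact group has finite index. Since `T` is surjective, `T⁻¹(N)` has
the same index as `N`, and it contains `N`; hence `T⁻¹(N) = N`, so `N` is a `T`-invariant set.
Its Haar measure is positive because `N` is open, and it is not `1` because a coset `gN ≠ N` is
disjoint from `N` and has the same measure.
-/

open MeasureTheory

theorem Subgroup.comap_eq_self_of_le_comap_s11 {G : Type*} [Group G] {H : Subgroup G} [H.FiniteIndex]
    {f : G →* G} (hf : Function.Surjective f) (hle : H ≤ H.comap f) : H.comap f = H := by
  by_contra hne
  have hlt := Subgroup.index_strictAnti (lt_of_le_of_ne hle (Ne.symm hne))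
  rw [H.index_comap_of_surjective hf] at hlt
  exact lt_irrefl _ hlt

theorem Subgroup.measure_ne_one_of_ne_top {G : Type*} [Group G] [MeasurableSpace G]
    [MeasurableMul G] (μ : Measure G) [μ.IsMulLeftInvariant] [IsProbabilityMeasure μ]
    {H : Subgroup G} (hH : MeasurableSet (H : Set G)) (hne : H ≠ ⊤) : μ H ≠ 1 := by
  obtain ⟨g, hg⟩ : ∃ g, g ∉ H := by simpa [Subgroup.eq_top_iff'] using hne
  have hdisj : Disjoint ((g * ·) ⁻¹' (H : Set G)) H :=
    Set.disjoint_left.2 fun x hgx hx => hg (by simpa using mul_mem hgx (inv_mem hx))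
  have hsum : μ H + μ H ≤ 1 := by
    calc μ H + μ H = μ ((g * ·) ⁻¹' (H : Set G)) + μ H := by rw [measure_preimage_mul]
      _ = μ ((g * ·) ⁻¹' (H : Set G) ∪ H) := (measure_union hdisj hH).symm
      _ ≤ 1 := prob_le_one
  intro h1
  rw [h1] at hsum
  norm_num at hsum

theorem stmt11_general {G : Type*} [Group G] [TopologicalSpace G] [IsTopologicalGroup G]
    [CompactSpace G] [MeasurableSpace G] [BorelSpace G]
    (μ : Measure G) [μ.IsHaarMeasure] [IsProbabilityMeasure μ]
    (T : G →* G) (hs : Function.Surjective T)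
    (N : Subgroup G) (ho : IsOpen (N : Set G)) (hne : N ≠ ⊤)
    (hTN : ⇑T '' (N : Set G) ⊆ (N : Set G)) :
    ¬ (∀ S : Set G, MeasurableSet S → ⇑T ⁻¹' S = S → μ S = 0 ∨ μ S = 1) := by
  have : Finite (G ⧸ N) := N.quotient_finite_of_isOpen ho
  have : N.FiniteIndex := Subgroup.finiteIndex_of_finite_quotient
  have hinv : ⇑T ⁻¹' (N : Set G) = N := by
    rw [← Subgroup.coe_comap, N.comap_eq_self_of_le_comap_s11 hs fun x hx => hTN ⟨x, hx, rfl⟩]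
  intro hergodic
  rcases hergodic N ho.measurableSet hinv with h0 | h1
  · exact (ho.measure_pos μ ⟨1, N.one_mem⟩).ne' h0
  · exact N.measure_ne_one_of_ne_top μ ho.measurableSet hne h1

theorem stmt11 {G : Type*} [Group G] [TopologicalSpace G] [IsTopologicalGroup G]
    [CompactSpace G] [T2Space G] [MeasurableSpace G] [BorelSpace G]
    (μ : Measure G) [μ.IsHaarMeasure] [IsProbabilityMeasure μ]
    (T : G →* G) (hc : Continuous T) (hs : Function.Surjective T)
    (N : Subgroup G) (hN : N.Normal) (ho : IsOpen (N : Set G)) (hne : N ≠ ⊤)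
    (hTN : ⇑T '' (N : Set G) ⊆ (N : Set G)) :
    ¬ (∀ S : Set G, MeasurableSet S → ⇑T ⁻¹' S = S → μ S = 0 ∨ μ S = 1) :=
  stmt11_general μ T hs N ho hne hTN
end

section
/- Let G be a profinite group such that for every natural number n, G has only finitely many open normal subgroups of index n. Let T : G → G be a surjective continuous group homomorphism. Then T is a quotient-preserving map; that is, for every neighborhood U of the identity there exists an open normal subgroup N of G with N ⊆ U and T(N) ⊆ N. -/
/-!
Given an open normal subgroup `H`, the iterated preimages `T⁻ⁿ(H)` are open normal subgroups, all of
the same index as `H` because `T` is surjective. By the finiteness hypothesis they take only finitely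
many values, so their intersection `N` is again an open normal subgroup; it lies in `H` and satisfies
`T(N) ⊆ N`. Since the open normal subgroups of a profinite group form a base at the identity, this
proves the theorem.
-/

namespace Subgroup

variable {G : Type*} [Group G]

theorem normal_comap_iterate (f : G →* G) {H : Subgroup G} (hH : H.Normal) (n : ℕ) :
    ((comap f)^[n] H).Normal := by
  induction n with
  | zero => exact hH
  | succ n ih => rw [Function.iterate_succ_apply']; exact ih.comap f

theorem index_comap_iterate_of_surjective {f : G →* G} (hf : Function.Surjective f)
    (H : Subgroup G) (n : ℕ) : ((comap f)^[n] H).index = H.index := by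
  induction n with
  | zero => rfl
  | succ n ih => rw [Function.iterate_succ_apply', index_comap_of_surjective _ hf, ih]

theorem iInf_comap_iterate_le_comap (f : G →* G) (H : Subgroup G) :
    ⨅ n, (comap f)^[n] H ≤ (⨅ n, (comap f)^[n] H).comap f := by
  intro x hx
  rw [mem_comap, mem_iInf]
  intro n
  simpa only [Function.iterate_succ_apply', mem_comap] using mem_iInf.mp hx (n + 1)

variable [TopologicalSpace G]

theorem isOpen_comap_iterate {f : G →* G} (hf : Continuous f) {H : Subgroup G}
    (hH : IsOpen (H : Set G)) (n : ℕ) : IsOpen ((comap f)^[n] H : Set G) := by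
  induction n with
  | zero => exact hH
  | succ n ih => rw [Function.iterate_succ_apply']; exact ih.preimage hf

theorem isOpen_iInf_of_finite_range {ι : Type*} {K : ι → Subgroup G}
    (hK : (Set.range K).Finite) (hopen : ∀ i, IsOpen (K i : Set G)) :
    IsOpen ((⨅ i, K i : Subgroup G) : Set G) := by
  rw [coe_iInf, ← Set.biInter_range (g := fun L : Subgroup G => (L : Set G))]
  exact hK.isOpen_biInter (Set.forall_mem_range.mpr hopen)

theorem exists_open_normal_le_comap_self
    (hfin : ∀ n : ℕ, {N : Subgroup G | N.Normal ∧ IsOpen (N : Set G) ∧ N.index = n}.Finite)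
    {f : G →* G} (hc : Continuous f) (hs : Function.Surjective f)
    {H : Subgroup G} (hH : H.Normal) (hHo : IsOpen (H : Set G)) :
    ∃ N : Subgroup G, N.Normal ∧ IsOpen (N : Set G) ∧ N ≤ H ∧ N ≤ N.comap f := by
  have hmem : ∀ n, (comap f)^[n] H ∈
      {N : Subgroup G | N.Normal ∧ IsOpen (N : Set G) ∧ N.index = H.index} := fun n =>
    ⟨normal_comap_iterate f hH n, isOpen_comap_iterate hc hHo n,
      index_comap_iterate_of_surjective hs H n⟩
  refine ⟨⨅ n, (comap f)^[n] H, ?_, ?_, iInf_le _ 0, iInf_comap_iterate_le_comap f H⟩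
  · exact normal_iInf_normal fun n => (hmem n).1
  · exact isOpen_iInf_of_finite_range ((hfin _).subset (Set.range_subset_iff.mpr hmem))
      fun n => (hmem n).2.1

end Subgroup

theorem stmt12_general {G : Type*} [Group G] [TopologicalSpace G] [IsTopologicalGroup G]
    [CompactSpace G] [TotallyDisconnectedSpace G]
    (hfin : ∀ n : ℕ, {N : Subgroup G | N.Normal ∧ IsOpen (N : Set G) ∧ N.index = n}.Finite)
    (T : G →* G) (hc : Continuous T) (hs : Function.Surjective T) :
    ∀ U ∈ nhds (1 : G), ∃ N : Subgroup G, N.Normal ∧ IsOpen (N : Set G) ∧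
      (N : Set G) ⊆ U ∧ ⇑T '' (N : Set G) ⊆ (N : Set G) := by
  intro U hU
  obtain ⟨V, hVU, hVo, h1V⟩ := mem_nhds_iff.mp hU
  obtain ⟨H, hHV⟩ := ProfiniteGrp.exist_openNormalSubgroup_sub_open_nhds_of_one hVo h1V
  obtain ⟨N, hN, hNo, hNH, hNT⟩ :=
    Subgroup.exists_open_normal_le_comap_self hfin hc hs H.isNormal' H.isOpen'
  exact ⟨N, hN, hNo, fun x hx => hVU (hHV (hNH hx)), Set.image_subset_iff.mpr hNT⟩

theorem stmt12 {G : Type*} [Group G] [TopologicalSpace G] [IsTopologicalGroup G]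
    [CompactSpace G] [T2Space G] [TotallyDisconnectedSpace G]
    (hfin : ∀ n : ℕ, {N : Subgroup G | N.Normal ∧ IsOpen (N : Set G) ∧ N.index = n}.Finite)
    (T : G →* G) (hc : Continuous T) (hs : Function.Surjective T) :
    ∀ U ∈ nhds (1 : G), ∃ N : Subgroup G, N.Normal ∧ IsOpen (N : Set G) ∧
      (N : Set G) ⊆ U ∧ ⇑T '' (N : Set G) ⊆ (N : Set G) :=
  stmt12_general hfin T hc hs
end

section
/- Let p be a prime and k ≥ 1, and let T : ℤ_p^k → ℤ_p^k be a surjective continuous additive group homomorphism. Then T is given by multiplication by a matrix in GL_k(ℤ_p) (i.e. an invertible k × k matrix over ℤ_p), T is a quotient-preserving map, and T is not ergodic with respect to the normalized Haar probability measure on ℤ_p^k. -/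
open MeasureTheory

section aux
variable {p : ℕ} [Fact p.Prime] {k : ℕ}

/-- A continuous additive endomorphism of ℤ_p^k is ℤ_p-linear. -/
noncomputable def toLinear (T : (Fin k → ℤ_[p]) →+ (Fin k → ℤ_[p])) (hc : Continuous T) :
    (Fin k → ℤ_[p]) →ₗ[ℤ_[p]] (Fin k → ℤ_[p]) where
  toFun := T
  map_add' := T.map_add
  map_smul' := by
    intro c x
    revert c
    have h1 : Continuous fun c : ℤ_[p] => T (c • x) :=
      hc.comp (continuous_id.smul continuous_const)
    have h2 : Continuous fun c : ℤ_[p] => c • T x :=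
      continuous_id.smul continuous_const
    have key : (fun c : ℤ_[p] => T (c • x)) = fun c => c • T x := by
      apply PadicInt.denseRange_natCast.equalizer h1 h2
      funext n
      simp only [Function.comp_apply, Nat.cast_smul_eq_nsmul, map_nsmul]
    intro c
    exact congrFun key c

/-- Divisibility by p^n is preserved by linear maps. -/
lemma dvd_apply (f : (Fin k → ℤ_[p]) →ₗ[ℤ_[p]] (Fin k → ℤ_[p])) (n : ℕ)
    (x : Fin k → ℤ_[p]) (hx : ∀ i, (p : ℤ_[p]) ^ n ∣ x i) (i : Fin k) :
    (p : ℤ_[p]) ^ n ∣ f x i := by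
  choose y hy using hx
  have hxy : x = (p : ℤ_[p]) ^ n • y := funext fun i => by
    simp [Pi.smul_apply, smul_eq_mul, hy i]
  rw [hxy, LinearMap.map_smul]
  exact ⟨f y i, by simp [Pi.smul_apply, smul_eq_mul]⟩

/-- The subgroup p^n ℤ_p^k. -/
noncomputable def pSub (p : ℕ) [Fact p.Prime] (k n : ℕ) : AddSubgroup (Fin k → ℤ_[p]) where
  carrier := {x | ∀ i, (p : ℤ_[p]) ^ n ∣ x i}
  add_mem' hx hy i := dvd_add (hx i) (hy i)
  zero_mem' i := dvd_zero _
  neg_mem' hx i := (dvd_neg).2 (hx i)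

lemma mem_pSub_iff_norm (n : ℕ) (z : ℤ_[p]) :
    (p : ℤ_[p]) ^ n ∣ z ↔ ‖z‖ ≤ (p : ℝ) ^ (-n : ℤ) := by
  rw [PadicInt.norm_le_pow_iff_mem_span_pow, Ideal.mem_span_singleton]

lemma pSub_isOpen (n : ℕ) : IsOpen ((pSub p k n : AddSubgroup (Fin k → ℤ_[p])) : Set (Fin k → ℤ_[p])) := by
  have : ((pSub p k n : AddSubgroup (Fin k → ℤ_[p])) : Set (Fin k → ℤ_[p])) =
      ⋂ i : Fin k, (fun x : Fin k → ℤ_[p] => x i) ⁻¹'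
        (Metric.ball 0 ((p : ℝ) ^ ((-n : ℤ) + 1))) := by
    ext x
    simp only [Set.mem_iInter, Set.mem_preimage, Metric.mem_ball, dist_zero_right]
    constructor
    · intro hx i
      have := (mem_pSub_iff_norm n (x i)).1 (hx i)
      exact (PadicInt.norm_le_pow_iff_norm_lt_pow_add_one _ _).1 this
    · intro hx i
      exact (mem_pSub_iff_norm n (x i)).2
        ((PadicInt.norm_le_pow_iff_norm_lt_pow_add_one _ _).2 (hx i))
  rw [this]
  exact isOpen_iInter_of_finite fun i => (Metric.isOpen_ball).preimage (continuous_apply i)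

end aux

theorem stmt14 {p : ℕ} [Fact p.Prime] {k : ℕ} (hk : 1 ≤ k)
    (μ : Measure (Fin k → ℤ_[p])) [μ.IsAddHaarMeasure] [IsProbabilityMeasure μ]
    (T : (Fin k → ℤ_[p]) →+ (Fin k → ℤ_[p])) (hc : Continuous T)
    (hs : Function.Surjective T) :
    -- T is given by multiplication by a matrix in GL_k(ℤ_p)
    (∃ M : GL (Fin k) ℤ_[p], ∀ x : Fin k → ℤ_[p],
      T x = Matrix.mulVec (M : Matrix (Fin k) (Fin k) ℤ_[p]) x) ∧
    -- T is a quotient-preserving map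
    (∀ U ∈ nhds (0 : Fin k → ℤ_[p]), ∃ N : AddSubgroup (Fin k → ℤ_[p]),
      IsOpen (N : Set (Fin k → ℤ_[p])) ∧ (N : Set (Fin k → ℤ_[p])) ⊆ U ∧
      ⇑T '' (N : Set (Fin k → ℤ_[p])) ⊆ N) ∧
    -- T is not ergodic
    ¬ (∀ S : Set (Fin k → ℤ_[p]), MeasurableSet S → ⇑T ⁻¹' S = S →
        μ S = 0 ∨ μ S = 1) := by
  have hp1 : 1 < (p : ℝ) := by exact_mod_cast (Fact.out : p.Prime).one_lt
  set f := toLinear T hc with hf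
  have hfT : ∀ x, f x = T x := fun x => rfl
  have hfs : Function.Surjective f := hs
  have hfinj : Function.Injective f :=
    OrzechProperty.injective_of_surjective_endomorphism f hfs
  have hfbij : Function.Bijective f := ⟨hfinj, hfs⟩
  -- part 1
  have hunit : IsUnit f := (Module.End.isUnit_iff f).2 hfbij
  have hMunit : IsUnit (LinearMap.toMatrix' f) := by
    obtain ⟨u, hu⟩ := hunit
    exact ⟨Units.map (LinearMap.toMatrixAlgEquiv' :
      Module.End ℤ_[p] (Fin k → ℤ_[p]) ≃ₐ[ℤ_[p]] Matrix (Fin k) (Fin k) ℤ_[p]).toRingEquiv.toMonoidHom u,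
      by rw [← hu]; rfl⟩
  have part1 : ∃ M : GL (Fin k) ℤ_[p], ∀ x : Fin k → ℤ_[p],
      T x = Matrix.mulVec (M : Matrix (Fin k) (Fin k) ℤ_[p]) x := by
    refine ⟨hMunit.unit, fun x => ?_⟩
    have : (hMunit.unit : Matrix (Fin k) (Fin k) ℤ_[p]) = LinearMap.toMatrix' f := rfl
    rw [this, ← Matrix.toLin'_apply, Matrix.toLin'_toMatrix']
    exact (hfT x).symm
  -- inverse map
  have hinv : ∀ n (x : Fin k → ℤ_[p]), (∀ i, (p : ℤ_[p]) ^ n ∣ f x i) →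
      ∀ i, (p : ℤ_[p]) ^ n ∣ x i := by
    intro n x hx
    set e := LinearEquiv.ofBijective f hfbij
    have : x = e.symm (f x) := by
      have := e.symm_apply_apply x
      exact this.symm
    rw [this]
    exact dvd_apply (e.symm : (Fin k → ℤ_[p]) →ₗ[ℤ_[p]] (Fin k → ℤ_[p])) n (f x) hx
  -- part 2
  have part2 : ∀ U ∈ nhds (0 : Fin k → ℤ_[p]), ∃ N : AddSubgroup (Fin k → ℤ_[p]),
      IsOpen (N : Set (Fin k → ℤ_[p])) ∧ (N : Set (Fin k → ℤ_[p])) ⊆ U ∧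
      ⇑T '' (N : Set (Fin k → ℤ_[p])) ⊆ N := by
    intro U hU
    obtain ⟨ε, hε, hball⟩ := Metric.mem_nhds_iff.1 hU
    obtain ⟨n, hn⟩ := exists_pow_lt_of_lt_one hε
      (show (p : ℝ)⁻¹ < 1 from inv_lt_one_of_one_lt₀ hp1)
    refine ⟨pSub p k n, pSub_isOpen n, ?_, ?_⟩
    · intro x hx
      apply hball
      rw [Metric.mem_ball]
      rcases Nat.eq_zero_or_pos k with hk0 | hk0
      · omega
      have : dist x 0 < ε := by
        rw [dist_pi_lt_iff hε]
        intro i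
        have h1 : ‖x i‖ ≤ (p : ℝ) ^ (-n : ℤ) := (mem_pSub_iff_norm n (x i)).1 (hx i)
        have h2 : (p : ℝ) ^ (-n : ℤ) = ((p : ℝ)⁻¹) ^ n := by
          rw [zpow_neg, zpow_natCast, inv_pow]
        simp only [Pi.zero_apply, dist_zero_right]
        calc ‖x i‖ ≤ (p : ℝ) ^ (-n : ℤ) := h1
          _ = ((p : ℝ)⁻¹) ^ n := h2
          _ < ε := hn
      exact this
    · rintro y ⟨x, hx, rfl⟩
      intro i
      rw [← hfT]
      exact dvd_apply f n x hx i
  -- part 3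
  refine ⟨part1, part2, ?_⟩
  intro h
  set S : Set (Fin k → ℤ_[p]) := ((pSub p k 1 : AddSubgroup (Fin k → ℤ_[p])) : Set (Fin k → ℤ_[p])) with hS
  have hSopen : IsOpen S := pSub_isOpen 1
  have hSmeas : MeasurableSet S := hSopen.measurableSet
  have hSinv : ⇑T ⁻¹' S = S := by
    ext x
    constructor
    · intro hx
      exact hinv 1 x (fun i => by simpa [hfT] using hx i)
    · intro hx i
      rw [← hfT]
      exact dvd_apply f 1 x hx i
  have hpos : 0 < μ S := hSopen.measure_pos μ ⟨0, (pSub p k 1).zero_mem⟩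
  -- S ≠ full measure: translate by a := fun _ => 1
  have hne1 : μ S ≠ 1 := by
    intro h1
    set a : Fin k → ℤ_[p] := fun _ => 1 with ha
    have hanotin : a ∉ S := by
      intro hmem
      have := hmem ⟨0, hk⟩
      simp only [ha, pow_one] at this
      have hn : ‖(1 : ℤ_[p])‖ < 1 := (PadicInt.norm_lt_one_iff_dvd 1).2 this
      simp at hn
    have hdisj : Disjoint S ((a + ·) '' S) := by
      rw [Set.disjoint_left]
      rintro x hx ⟨y, hy, rfl⟩
      exact hanotin (by
        have : a = (a + y) - y := by ring
        rw [this]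
        exact (pSub p k 1).sub_mem hx hy)
    have himg : (a + ·) '' S = (fun x => -a + x) ⁻¹' S := by
      ext x
      simp only [Set.mem_image, Set.mem_preimage]
      constructor
      · rintro ⟨y, hy, rfl⟩; simpa using hy
      · intro hx; exact ⟨-a + x, hx, by ring⟩
    have hmeasimg : MeasurableSet ((a + ·) '' S) := by
      rw [himg]
      exact hSmeas.preimage (measurable_const_add _)
    have hμimg : μ ((a + ·) '' S) = μ S := by
      rw [himg]
      exact measure_preimage_add μ (-a) S
    have : μ S + μ S ≤ 1 := by
      calc μ S + μ S = μ (S ∪ (a + ·) '' S) := by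
            rw [measure_union hdisj hmeasimg, hμimg]
        _ ≤ μ Set.univ := measure_mono (Set.subset_univ _)
        _ = 1 := measure_univ
    rw [h1] at this
    norm_num at this
  rcases h S hSmeas hSinv with h0 | h1
  · exact hpos.ne' h0
  · exact hne1 h1
end
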